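/- arXiv:1007.2055 — 5 statements merged into one kernel-verified Lean document; each statement's English description precedes it below -/
import Mathlib

section
/- For every α ∈ (0,2) and every x < 0, the function y ↦ u_α(x,y) is a probability density on ℝ, i.e. ∫₀^∞ (sin(απ/2)/π) · (y−x)⁻¹ · (−x/y)^{α/2} dy = 1. -/
/-!
The substitutions `y = -x t` and `t = u / (1 - u)` turn the integral into the Beta integral
`B(1 - α/2, α/2) = Γ(1 - α/2) Γ(α/2)`, which Euler's reflection formula evaluates to
`π / sin (απ/2)`.
-/

open MeasureTheory Real Set

/-- The upwards-overshoot density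
`u_α(x,y) = (sin(απ/2)/π) (y-x)⁻¹ (-x/y)^{α/2} 1_{[0,∞)}(y)` (for `x < 0`). -/
noncomputable def uDens (α x y : ℝ) : ℝ :=
  Set.indicator (Set.Ici (0 : ℝ))
    (fun z => (Real.sin (α * π / 2) / π) * (z - x)⁻¹ * (-x / z) ^ (α / 2)) y

theorem integral_Ioo_rpow_mul_one_sub_rpow {a b : ℝ} (ha : 0 < a) (hb : 0 < b) :
    ∫ u in Ioo (0 : ℝ) 1, u ^ (a - 1) * (1 - u) ^ (b - 1) = ProbabilityTheory.beta a b := by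
  have hcast : ∀ u ∈ uIcc (0 : ℝ) 1, ((u ^ (a - 1) * (1 - u) ^ (b - 1) : ℝ) : ℂ)
      = (u : ℂ) ^ ((a : ℂ) - 1) * (1 - (u : ℂ)) ^ ((b : ℂ) - 1) := by
    intro u hu
    rw [uIcc_of_le zero_le_one] at hu
    rw [Complex.ofReal_mul, Complex.ofReal_cpow hu.1, Complex.ofReal_cpow (by linarith [hu.2])]
    push_cast
    rfl
  rw [ProbabilityTheory.beta_eq_betaIntegralReal a b ha hb, Complex.betaIntegral,
    ← intervalIntegral.integral_congr hcast, intervalIntegral.integral_ofReal, Complex.ofReal_re,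
    intervalIntegral.integral_of_le zero_le_one, integral_Ioc_eq_integral_Ioo]

theorem integral_Ioi_eq_integral_Ioo_comp_div_one_sub {E : Type*} [NormedAddCommGroup E]
    [NormedSpace ℝ E] (f : ℝ → E) :
    ∫ y in Ioi (0 : ℝ), f y =
      ∫ u in Ioo (0 : ℝ) 1, ((1 - u) ^ 2)⁻¹ • f (u / (1 - u)) := by
  have himage : (fun u : ℝ ↦ u / (1 - u)) '' Ioo 0 1 = Ioi 0 := by
    ext y
    constructor
    · rintro ⟨u, ⟨hu0, hu1⟩, rfl⟩
      exact div_pos hu0 (sub_pos.2 hu1)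
    · intro (hy : 0 < y)
      have hy1 : y / (1 + y) < 1 := (div_lt_one (by positivity)).2 (by linarith)
      refine ⟨y / (1 + y), ⟨by positivity, hy1⟩, ?_⟩
      field_simp
      ring
  have hderiv : ∀ u ∈ Ioo (0 : ℝ) 1,
      HasDerivWithinAt (fun u : ℝ ↦ u / (1 - u)) ((1 - u) ^ 2)⁻¹ (Ioo 0 1) u := by
    intro u ⟨_, hu1⟩
    have h : HasDerivAt (fun u : ℝ ↦ u / (1 - u)) ((1 * (1 - u) - u * -1) / (1 - u) ^ 2) u :=
      (hasDerivAt_id' u).div ((hasDerivAt_id' u).const_sub 1) (sub_pos.2 hu1).ne'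
    exact (h.congr_deriv (by ring)).hasDerivWithinAt
  have hinj : InjOn (fun u : ℝ ↦ u / (1 - u)) (Ioo 0 1) := by
    intro u ⟨_, hu1⟩ v ⟨_, hv1⟩ h
    rw [div_eq_div_iff (sub_pos.2 hu1).ne' (sub_pos.2 hv1).ne'] at h
    linarith
  rw [← himage, integral_image_eq_integral_abs_deriv_smul measurableSet_Ioo hderiv hinj]
  refine setIntegral_congr_fun measurableSet_Ioo fun u _ ↦ ?_
  rw [abs_of_nonneg (by positivity)]

theorem integral_Ioi_inv_add_one_mul_rpow_neg {c : ℝ} (hc0 : 0 < c) (hc1 : c < 1) :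
    ∫ t in Ioi (0 : ℝ), (t + 1)⁻¹ * t ^ (-c) = π / sin (π * c) := by
  have hintegrand : ∀ u ∈ Ioo (0 : ℝ) 1,
      ((1 - u) ^ 2)⁻¹ • ((u / (1 - u) + 1)⁻¹ * (u / (1 - u)) ^ (-c))
        = u ^ ((1 - c) - 1) * (1 - u) ^ (c - 1) := by
    intro u ⟨hu0, hu1⟩
    have h1u : 0 < 1 - u := sub_pos.2 hu1
    rw [smul_eq_mul, div_rpow hu0.le h1u.le, rpow_neg hu0.le, rpow_neg h1u.le,
      sub_sub_cancel_left, rpow_neg hu0.le, rpow_sub_one h1u.ne']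
    field_simp
    ring
  rw [integral_Ioi_eq_integral_Ioo_comp_div_one_sub,
    setIntegral_congr_fun measurableSet_Ioo hintegrand,
    integral_Ioo_rpow_mul_one_sub_rpow (by linarith) hc0, ProbabilityTheory.beta,
    sub_add_cancel, Gamma_one, div_one, mul_comm, Gamma_mul_Gamma_one_sub]

theorem integral_Ioi_inv_add_mul_div_rpow {s c : ℝ} (hs : 0 < s) (hc0 : 0 < c) (hc1 : c < 1) :
    ∫ y in Ioi (0 : ℝ), (y + s)⁻¹ * (s / y) ^ c = π / sin (π * c) := by
  have hscale := integral_comp_mul_left_Ioi' (fun y ↦ (y + s)⁻¹ * (s / y) ^ c) 0 hs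
  rw [mul_zero] at hscale
  rw [← integral_Ioi_inv_add_one_mul_rpow_neg hc0 hc1, ← hscale, smul_eq_mul,
    ← integral_const_mul]
  refine setIntegral_congr_fun measurableSet_Ioi fun t (ht : 0 < t) ↦ ?_
  rw [div_mul_cancel_left₀ hs.ne', inv_rpow ht.le, ← rpow_neg ht.le]
  field_simp

/-- For `α ∈ (0,2)` and `x < 0`, `y ↦ u_α(x,y)` is a probability density on `ℝ`, i.e.
`∫₀^∞ (sin(απ/2)/π) (y-x)⁻¹ (-x/y)^{α/2} dy = 1`. -/
theorem overshoot_density_integrates_to_one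
    (α : ℝ) (hα : α ∈ Set.Ioo (0 : ℝ) 2) (x : ℝ) (hx : x < 0) :
    ∫ y in Set.Ioi (0 : ℝ), (Real.sin (α * π / 2) / π) * (y - x)⁻¹ * (-x / y) ^ (α / 2) = 1 := by
  obtain ⟨hα0, hα2⟩ := hα
  have hsin : 0 < sin (π * (α / 2)) :=
    sin_pos_of_pos_of_lt_pi (by positivity) (by nlinarith [pi_pos])
  simp_rw [mul_assoc, sub_eq_add_neg]
  rw [integral_const_mul,
    integral_Ioi_inv_add_mul_div_rpow (neg_pos.2 hx) (by positivity) (by linarith),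
    show α * π / 2 = π * (α / 2) by ring, div_mul_div_cancel₀ pi_ne_zero, div_self hsin.ne']
end

section
/- Let α, β ∈ (0,2) and r ∈ ℝ with (max(α,β))/2 − 1 < r < (min(α,β))/2. Then ∫₀^∞ ∫₀^∞ (x·y)^r · u_α(−1,x) · u_β(−1,y) dx dy = [sin(απ/2)·sin(βπ/2)] / [sin((α−2r)π/2)·sin((β−2r)π/2)]. -/
/-!
The integrand factors, so the double integral is the product of two single moments
`∫₀^∞ x^r u_α(-1,x) dx`. With `s = r - α/2 + 1 ∈ (0,1)` such a moment is `sin(απ/2)/π` times the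
Mellin transform `∫₀^∞ x^(s-1) (1+x)⁻¹ dx`; the substitution `x = t/(1-t)` turns the latter into
the Beta integral `B(s, 1-s) = Γ(s) Γ(1-s)`, which Euler's reflection formula evaluates to
`π / sin(πs)`.
-/

open MeasureTheory Real Set

theorem integral_Ioo_rpow_mul_one_sub_rpow_s7 {u v : ℝ} (hu : 0 < u) (hv : 0 < v) :
    ∫ t in Ioo (0 : ℝ) 1, t ^ (u - 1) * (1 - t) ^ (v - 1)
      = Real.Gamma u * Real.Gamma v / Real.Gamma (u + v) := by
  apply Complex.ofReal_injective
  have hbeta := Complex.betaIntegral_eq_Gamma_mul_div u v (by simpa) (by simpa)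
  push_cast [← Complex.Gamma_ofReal]
  rw [← hbeta, Complex.betaIntegral, intervalIntegral.integral_of_le zero_le_one,
    ← integral_Ioc_eq_integral_Ioo]
  refine (integral_ofReal (𝕜 := ℂ)).symm.trans <|
    setIntegral_congr_fun measurableSet_Ioc fun t ht => ?_
  have h1 : 0 ≤ 1 - t := sub_nonneg.2 ht.2
  rw [show (1 : ℂ) - t = ((1 - t : ℝ) : ℂ) by push_cast; ring,
    show (u : ℂ) - 1 = ((u - 1 : ℝ) : ℂ) by push_cast; ring,
    show (v : ℂ) - 1 = ((v - 1 : ℝ) : ℂ) by push_cast; ring,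
    ← Complex.ofReal_cpow ht.1.le, ← Complex.ofReal_cpow h1]
  exact Complex.ofReal_mul _ _

theorem integral_Ioo_rpow_mul_one_sub_rpow_neg {s : ℝ} (hs0 : 0 < s) (hs1 : s < 1) :
    ∫ t in Ioo (0 : ℝ) 1, t ^ (s - 1) * (1 - t) ^ (-s) = π / Real.sin (π * s) := by
  have h := integral_Ioo_rpow_mul_one_sub_rpow_s7 hs0 (sub_pos.2 hs1)
  rwa [add_sub_cancel, Real.Gamma_one, div_one, Real.Gamma_mul_Gamma_one_sub,
    sub_sub_cancel_left] at h

theorem image_div_one_sub_Ioo : (fun t : ℝ => t / (1 - t)) '' Ioo 0 1 = Ioi 0 := by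
  ext x
  constructor
  · rintro ⟨t, ⟨ht0, ht1⟩, rfl⟩
    exact div_pos ht0 (sub_pos.2 ht1)
  · intro (hx : 0 < x)
    have hx1 : (0 : ℝ) < 1 + x := by linarith
    refine ⟨x / (1 + x), ⟨div_pos hx hx1, (div_lt_one hx1).2 (by linarith)⟩, ?_⟩
    field_simp
    ring

theorem integral_Ioi_eq_integral_Ioo_div_one_sub (f : ℝ → ℝ) :
    ∫ x in Ioi (0 : ℝ), f x = ∫ t in Ioo (0 : ℝ) 1, ((1 - t) ^ 2)⁻¹ * f (t / (1 - t)) := by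
  have hderiv : ∀ t ∈ Ioo (0 : ℝ) 1,
      HasDerivWithinAt (fun t : ℝ => t / (1 - t)) ((1 - t) ^ 2)⁻¹ (Ioo 0 1) t := by
    intro t ht
    have hne : (1 : ℝ) - t ≠ 0 := (sub_pos.2 ht.2).ne'
    refine (((hasDerivAt_id' t).div ((hasDerivAt_id' t).const_sub 1) hne).congr_deriv
      ?_).hasDerivWithinAt
    field_simp
    ring
  have hinj : InjOn (fun t : ℝ => t / (1 - t)) (Ioo 0 1) := by
    intro a ha b hb hab
    have ha1 : (1 : ℝ) - a ≠ 0 := (sub_pos.2 ha.2).ne'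
    have hb1 : (1 : ℝ) - b ≠ 0 := (sub_pos.2 hb.2).ne'
    field_simp at hab
    linarith
  rw [← image_div_one_sub_Ioo,
    integral_image_eq_integral_abs_deriv_smul measurableSet_Ioo hderiv hinj]
  refine setIntegral_congr_fun measurableSet_Ioo fun t _ => ?_
  rw [smul_eq_mul, abs_of_nonneg (by positivity)]

theorem integral_Ioi_rpow_mul_inv_one_add {s : ℝ} (hs0 : 0 < s) (hs1 : s < 1) :
    ∫ x in Ioi (0 : ℝ), x ^ (s - 1) * (1 + x)⁻¹ = π / Real.sin (π * s) := by
  rw [integral_Ioi_eq_integral_Ioo_div_one_sub,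
    ← integral_Ioo_rpow_mul_one_sub_rpow_neg hs0 hs1]
  refine setIntegral_congr_fun measurableSet_Ioo fun t ht => ?_
  have h1 : 0 < 1 - t := sub_pos.2 ht.2
  have hsum : 1 + t / (1 - t) = (1 - t)⁻¹ := by field_simp; ring
  rw [hsum, inv_inv, div_rpow ht.1.le h1.le, div_eq_mul_inv, ← rpow_neg h1.le,
    ← rpow_natCast, ← rpow_neg h1.le]
  calc (1 - t) ^ (-((2 : ℕ) : ℝ)) * (t ^ (s - 1) * (1 - t) ^ (-(s - 1)) * (1 - t))
      = t ^ (s - 1) * ((1 - t) ^ (-((2 : ℕ) : ℝ) + -(s - 1) + 1)) := by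
        rw [rpow_add h1, rpow_add h1, rpow_one]; ring
    _ = t ^ (s - 1) * (1 - t) ^ (-s) := by congr 2; push_cast; ring

theorem rpow_mul_uDens_neg_one (α r : ℝ) {x : ℝ} (hx : 0 < x) :
    x ^ r * uDens α (-1) x
      = Real.sin (α * π / 2) / π * (x ^ (r - α / 2 + 1 - 1) * (1 + x)⁻¹) := by
  rw [uDens, indicator_of_mem (mem_Ici.2 hx.le), neg_neg, sub_neg_eq_add, add_comm x,
    one_div, inv_rpow hx.le, ← rpow_neg hx.le, add_sub_cancel_right, sub_eq_add_neg,
    rpow_add hx]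
  ring

theorem integral_Ioi_rpow_mul_uDens_neg_one {α r : ℝ} (h1 : α / 2 - 1 < r) (h2 : r < α / 2) :
    ∫ x in Ioi (0 : ℝ), x ^ r * uDens α (-1) x
      = Real.sin (α * π / 2) / Real.sin ((α - 2 * r) * π / 2) := by
  rw [setIntegral_congr_fun measurableSet_Ioi fun x hx => rpow_mul_uDens_neg_one α r hx,
    integral_const_mul, integral_Ioi_rpow_mul_inv_one_add (by linarith) (by linarith)]
  have hsin : Real.sin (π * (r - α / 2 + 1)) = Real.sin ((α - 2 * r) * π / 2) := by
    rw [mul_add, mul_one, sin_add_pi, ← sin_neg]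
    ring_nf
  rw [hsin]
  field_simp

theorem overshoot_product_moment_general
    (α β r : ℝ)
    (hr1 : max α β / 2 - 1 < r) (hr2 : r < min α β / 2) :
    ∫ y in Set.Ioi (0 : ℝ), ∫ x in Set.Ioi (0 : ℝ),
        (x * y) ^ r * uDens α (-1) x * uDens β (-1) y
      = Real.sin (α * π / 2) * Real.sin (β * π / 2)
          / (Real.sin ((α - 2 * r) * π / 2) * Real.sin ((β - 2 * r) * π / 2)) := by
  have hmax := max_lt_iff.1 (show max (α / 2 - 1) (β / 2 - 1) < r by
    rwa [max_sub_sub_right, max_div_div_right zero_le_two])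
  have hmin := lt_min_iff.1 (show r < min (α / 2) (β / 2) by
    rwa [min_div_div_right zero_le_two])
  have hsplit : ∀ y ∈ Ioi (0 : ℝ), ∀ x ∈ Ioi (0 : ℝ),
      (x * y) ^ r * uDens α (-1) x * uDens β (-1) y
        = x ^ r * uDens α (-1) x * (y ^ r * uDens β (-1) y) := fun y hy x hx => by
    rw [mul_rpow (le_of_lt hx) (le_of_lt hy)]; ring
  rw [setIntegral_congr_fun measurableSet_Ioi fun y hy =>
      setIntegral_congr_fun measurableSet_Ioi (hsplit y hy),
    setIntegral_congr_fun measurableSet_Ioi fun y _ => integral_mul_const _ _,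
    integral_const_mul, integral_Ioi_rpow_mul_uDens_neg_one hmax.1 hmin.1,
    integral_Ioi_rpow_mul_uDens_neg_one hmax.2 hmin.2, div_mul_div_comm]

/-- For `α, β ∈ (0,2)` and `max(α,β)/2 - 1 < r < min(α,β)/2`,
`∫₀^∞ ∫₀^∞ (xy)^r u_α(-1,x) u_β(-1,y) dx dy
  = sin(απ/2) sin(βπ/2) / (sin((α-2r)π/2) sin((β-2r)π/2))`. -/
theorem overshoot_product_moment
    (α β r : ℝ) (hα : α ∈ Set.Ioo (0 : ℝ) 2) (hβ : β ∈ Set.Ioo (0 : ℝ) 2)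
    (hr1 : max α β / 2 - 1 < r) (hr2 : r < min α β / 2) :
    ∫ y in Set.Ioi (0 : ℝ), ∫ x in Set.Ioi (0 : ℝ),
        (x * y) ^ r * uDens α (-1) x * uDens β (-1) y
      = Real.sin (α * π / 2) * Real.sin (β * π / 2)
          / (Real.sin ((α - 2 * r) * π / 2) * Real.sin ((β - 2 * r) * π / 2)) :=
  overshoot_product_moment_general α β r hr1 hr2
end

section
/- Let α, β ∈ (0,2) and r ∈ ℝ with r ≥ (min(α,β))/2 or r ≤ (max(α,β))/2 − 1. Then the function (x,y) ↦ (x·y)^r · u_α(−1,x) · u_β(−1,y) is not Lebesgue integrable on (0,∞)×(0,∞); equivalently, the corresponding double Lebesgue integral equals ∞. -/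
open MeasureTheory Real Set

/-! The product moment factorises into two one-dimensional moments `∫₀^∞ x^r u_α(-1,x) dx`,
each a positive multiple of `∫₀^∞ x^(r-α/2) (x+1)⁻¹ dx`. That integrand behaves like
`x^(r-α/2-1)` at infinity and like `x^(r-α/2)` at zero, so it diverges at infinity when
`r ≥ α/2` and at zero when `r ≤ α/2 - 1`. One divergent factor and one positive factor make
the product infinite. -/

lemma not_integrableOn_Ioi_one_rpow_mul_inv_add_one {s : ℝ} (hs : 0 ≤ s) :
    ¬ IntegrableOn (fun x : ℝ => x ^ s * (x + 1)⁻¹) (Ioi 1) := by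
  intro hint
  have hbound : ∀ x ∈ Ioi (1 : ℝ), ‖x ^ (-1 : ℝ)‖ ≤ 2 * (x ^ s * (x + 1)⁻¹) := by
    intro x (hx : 1 < x)
    have hs1 : 1 ≤ x ^ s := one_le_rpow hx.le hs
    rw [norm_of_nonneg (by positivity), rpow_neg_one]
    calc x⁻¹ = 2 * (2 * x)⁻¹ := by field_simp
      _ ≤ 2 * (x + 1)⁻¹ := by gcongr; linarith
      _ ≤ 2 * (x ^ s * (x + 1)⁻¹) := by gcongr; exact le_mul_of_one_le_left (by positivity) hs1
  have hinv : IntegrableOn (fun x : ℝ => x ^ (-1 : ℝ)) (Ioi 1) :=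
    (hint.const_mul 2).mono' (by fun_prop) (ae_restrict_of_forall_mem measurableSet_Ioi hbound)
  exact absurd ((integrableOn_Ioi_rpow_iff one_pos).mp hinv) (lt_irrefl _)

lemma not_integrableOn_Ioo_zero_one_rpow_mul_inv_add_one {s : ℝ} (hs : s ≤ -1) :
    ¬ IntegrableOn (fun x : ℝ => x ^ s * (x + 1)⁻¹) (Ioo 0 1) := by
  intro hint
  have hbound : ∀ x ∈ Ioo (0 : ℝ) 1, ‖x ^ (-1 : ℝ)‖ ≤ 2 * (x ^ s * (x + 1)⁻¹) := by
    rintro x ⟨hx0, hx1⟩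
    rw [norm_of_nonneg (by positivity)]
    calc x ^ (-1 : ℝ) = 2 * (x ^ (-1 : ℝ) * 2⁻¹) := by ring
      _ ≤ 2 * (x ^ s * (x + 1)⁻¹) := by
        gcongr 2 * ?_
        exact mul_le_mul (rpow_le_rpow_of_exponent_ge hx0 hx1.le hs)
          (inv_anti₀ (by positivity) (by linarith)) (by norm_num) (by positivity)
  have hinv : IntegrableOn (fun x : ℝ => x ^ (-1 : ℝ)) (Ioo 0 1) :=
    (hint.const_mul 2).mono' (by fun_prop) (ae_restrict_of_forall_mem measurableSet_Ioo hbound)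
  exact absurd ((intervalIntegral.integrableOn_Ioo_rpow_iff one_pos).mp hinv) (lt_irrefl _)

lemma setLIntegral_Ioi_rpow_mul_inv_add_one_eq_top {s : ℝ} (hs : 0 ≤ s ∨ s ≤ -1) :
    ∫⁻ x in Ioi 0, ENNReal.ofReal (x ^ s * (x + 1)⁻¹) = ⊤ := by
  by_contra hfin
  have hint : IntegrableOn (fun x : ℝ => x ^ s * (x + 1)⁻¹) (Ioi 0) :=
    (lintegral_ofReal_ne_top_iff_integrable (by fun_prop)
      (ae_restrict_of_forall_mem measurableSet_Ioi fun x (hx : 0 < x) => by positivity)).mp hfin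
  rcases hs with hs | hs
  · exact not_integrableOn_Ioi_one_rpow_mul_inv_add_one hs
      (hint.mono_set (Ioi_subset_Ioi zero_le_one))
  · exact not_integrableOn_Ioo_zero_one_rpow_mul_inv_add_one hs
      (hint.mono_set Ioo_subset_Ioi_self)

lemma sin_mul_pi_div_two_pos {α : ℝ} (hα : α ∈ Ioo (0 : ℝ) 2) : 0 < sin (α * π / 2) :=
  sin_pos_of_pos_of_lt_pi (by have := hα.1; positivity) (by nlinarith [pi_pos, hα.2])

lemma measurable_uDens (α x : ℝ) : Measurable (uDens α x) :=
  Measurable.indicator (by fun_prop) measurableSet_Ici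

lemma rpow_mul_uDens_neg_one_of_pos (α r : ℝ) {x : ℝ} (hx : 0 < x) :
    x ^ r * uDens α (-1) x = sin (α * π / 2) / π * (x ^ (r - α / 2) * (x + 1)⁻¹) := by
  rw [uDens, indicator_of_mem (mem_Ici.mpr hx.le), neg_neg, one_div, inv_rpow hx.le,
    ← rpow_neg hx.le, sub_eq_add_neg r, rpow_add hx]
  ring

noncomputable def overshootMoment (α r : ℝ) : ENNReal :=
  ∫⁻ x in Ioi 0, ENNReal.ofReal (x ^ r * uDens α (-1) x)

lemma rpow_mul_uDens_neg_one_pos {α : ℝ} (hα : α ∈ Ioo (0 : ℝ) 2) (r : ℝ) {x : ℝ}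
    (hx : 0 < x) : 0 < x ^ r * uDens α (-1) x := by
  have := sin_mul_pi_div_two_pos hα
  rw [rpow_mul_uDens_neg_one_of_pos α r hx]
  positivity

lemma overshootMoment_pos {α : ℝ} (hα : α ∈ Ioo (0 : ℝ) 2) (r : ℝ) :
    0 < overshootMoment α r := by
  rw [overshootMoment, setLIntegral_pos_iff (by have := measurable_uDens α (-1); fun_prop)]
  calc (0 : ENNReal) < volume (Ioi (0 : ℝ)) := by simp
    _ ≤ _ := measure_mono <| subset_inter (fun x (hx : 0 < x) =>
      (ENNReal.ofReal_pos.mpr (rpow_mul_uDens_neg_one_pos hα r hx)).ne') subset_rfl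

lemma overshootMoment_eq_top {α r : ℝ} (hα : α ∈ Ioo (0 : ℝ) 2)
    (hr : α / 2 ≤ r ∨ r ≤ α / 2 - 1) :
    overshootMoment α r = ⊤ := by
  have hc : 0 < sin (α * π / 2) / π := div_pos (sin_mul_pi_div_two_pos hα) pi_pos
  calc overshootMoment α r
      = ∫⁻ x in Ioi 0, ENNReal.ofReal (sin (α * π / 2) / π)
          * ENNReal.ofReal (x ^ (r - α / 2) * (x + 1)⁻¹) :=
        setLIntegral_congr_fun measurableSet_Ioi fun x (hx : 0 < x) => by
          rw [rpow_mul_uDens_neg_one_of_pos α r hx, ENNReal.ofReal_mul hc.le]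
    _ = ENNReal.ofReal (sin (α * π / 2) / π)
          * ∫⁻ x in Ioi 0, ENNReal.ofReal (x ^ (r - α / 2) * (x + 1)⁻¹) :=
        lintegral_const_mul' _ _ ENNReal.ofReal_ne_top
    _ = ⊤ := by
      have hs : 0 ≤ r - α / 2 ∨ r - α / 2 ≤ -1 := by
        rcases hr with h | h <;> [left; right] <;> linarith
      rw [setLIntegral_Ioi_rpow_mul_inv_add_one_eq_top hs,
        ENNReal.mul_top (ENNReal.ofReal_pos.mpr hc).ne']

lemma setLIntegral_prod_moment_eq_mul {α : ℝ} (hα : α ∈ Ioo (0 : ℝ) 2) (β r : ℝ) :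
    ∫⁻ p : ℝ × ℝ in Ioi 0 ×ˢ Ioi 0,
        ENNReal.ofReal ((p.1 * p.2) ^ r * uDens α (-1) p.1 * uDens β (-1) p.2)
      = overshootMoment α r * overshootMoment β r := by
  have hα_meas := measurable_uDens α (-1)
  have hβ_meas := measurable_uDens β (-1)
  rw [overshootMoment, overshootMoment, ← lintegral_prod_mul (by fun_prop) (by fun_prop),
    Measure.prod_restrict, ← Measure.volume_eq_prod]
  refine setLIntegral_congr_fun (measurableSet_Ioi.prod measurableSet_Ioi) ?_
  rintro ⟨x, y⟩ ⟨hx, hy⟩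
  dsimp only at hx hy ⊢
  rw [← ENNReal.ofReal_mul (rpow_mul_uDens_neg_one_pos hα r hx).le,
    mul_rpow hx.le hy.le]
  ring_nf

/-- For `α, β ∈ (0,2)` and `r ≥ min(α,β)/2` or `r ≤ max(α,β)/2 - 1`, the function
`(x,y) ↦ (xy)^r u_α(-1,x) u_β(-1,y)` is not Lebesgue integrable on `(0,∞)×(0,∞)`;
equivalently the corresponding (extended-real-valued) double Lebesgue integral is infinite. -/
theorem overshoot_product_moment_infinite
    (α β r : ℝ) (hα : α ∈ Set.Ioo (0 : ℝ) 2) (hβ : β ∈ Set.Ioo (0 : ℝ) 2)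
    (hr : min α β / 2 ≤ r ∨ r ≤ max α β / 2 - 1) :
    ¬ MeasureTheory.IntegrableOn
        (fun p : ℝ × ℝ => (p.1 * p.2) ^ r * uDens α (-1) p.1 * uDens β (-1) p.2)
        (Set.Ioi (0 : ℝ) ×ˢ Set.Ioi (0 : ℝ)) ∧
    ∫⁻ p : ℝ × ℝ in Set.Ioi (0 : ℝ) ×ˢ Set.Ioi (0 : ℝ),
        ENNReal.ofReal ((p.1 * p.2) ^ r * uDens α (-1) p.1 * uDens β (-1) p.2) = ⊤ := by
  have hr' : (α / 2 ≤ r ∨ r ≤ α / 2 - 1) ∨ (β / 2 ≤ r ∨ r ≤ β / 2 - 1) := by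
    rcases le_total α β with hab | hab
    · rw [min_eq_left hab, max_eq_right hab] at hr; tauto
    · rw [min_eq_right hab, max_eq_left hab] at hr; tauto
  have htop : ∫⁻ p : ℝ × ℝ in Ioi 0 ×ˢ Ioi 0,
      ENNReal.ofReal ((p.1 * p.2) ^ r * uDens α (-1) p.1 * uDens β (-1) p.2) = ⊤ := by
    rw [setLIntegral_prod_moment_eq_mul hα β r]
    rcases hr' with h | h
    · rw [overshootMoment_eq_top hα h, ENNReal.top_mul (overshootMoment_pos hβ r).ne']
    · rw [overshootMoment_eq_top hβ h, ENNReal.mul_top (overshootMoment_pos hα r).ne']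
  exact ⟨fun hint => ((lintegral_ofReal_le_lintegral_enorm _).trans_lt hint.2).ne htop, htop⟩
end

section
/- Let α, β ∈ (0,2) with α + β = 2, and let U and V be independent real random variables with densities u_α(−1,·) and v_β(1,·) respectively. Then the random variables −U·V and (−U·V)^{−1} have the same distribution; i.e. for every s ∈ ℝ, P(−U·V ≤ s) = P((−U·V)^{−1} ≤ s). -/
open MeasureTheory ProbabilityTheory Real Set

/-- The downwards-overshoot density
`v_α(x,y) = (sin(απ/2)/π) (x-y)⁻¹ (-x/y)^{α/2} 1_{(-∞,0]}(y)` (for `x > 0`). -/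
noncomputable def vDens (α x y : ℝ) : ℝ :=
  Set.indicator (Set.Iic (0 : ℝ))
    (fun z => (Real.sin (α * π / 2) / π) * (x - z)⁻¹ * (-x / z) ^ (α / 2)) y


/-! With `X = U` and `Y = -V`, the variable `-U·V = X·Y` is a product of independent
variables. Under `x ↦ x⁻¹` the density `u_α(-1, ·)` picks up the Jacobian `x⁻²` and
becomes `v_β(1, -·)` exactly when `α + β = 2`, so `X⁻¹` has the law of `Y` and `Y⁻¹`
that of `X`. Hence `(X·Y)⁻¹ = X⁻¹·Y⁻¹` has the law of `Y·X = X·Y`. -/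

open scoped ENNReal

namespace ProbabilityTheory

variable {Ω M : Type*} {mΩ : MeasurableSpace Ω} {μ : Measure Ω}
  [DivisionCommMonoid M] [MeasurableSpace M] [MeasurableMul₂ M] [MeasurableInv M]

theorem IndepFun.identDistrib_mul_inv [IsFiniteMeasure μ] {X Y : Ω → M}
    (hXY : IndepFun X Y μ) (h : IdentDistrib X⁻¹ Y μ μ) :
    IdentDistrib (X * Y) (X * Y)⁻¹ μ μ := by
  have h' : IdentDistrib Y⁻¹ X μ μ := by
    convert h.symm.comp measurable_inv using 1
    · rfl
    · exact (inv_inv X).symm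
  have hpair : IdentDistrib (fun ω ↦ (Y ω, X ω)) (fun ω ↦ (X⁻¹ ω, Y⁻¹ ω)) μ μ :=
    h.symm.prodMk h'.symm hXY.symm (hXY.comp measurable_inv measurable_inv)
  convert hpair.comp measurable_mul using 1 <;> ext ω
  · exact mul_comm (X ω) (Y ω)
  · exact mul_inv (X ω) (Y ω)

end ProbabilityTheory

theorem MeasureTheory.Measure.map_neg_withDensity {G : Type*} [AddGroup G] [MeasurableSpace G]
    [MeasurableNeg G] (μ : Measure G) [μ.IsNegInvariant] (f : G → ℝ≥0∞) :
    (μ.withDensity f).map Neg.neg = μ.withDensity fun x ↦ f (-x) := by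
  ext s hs
  rw [Measure.map_apply measurable_neg hs, withDensity_apply _ (measurable_neg hs),
    withDensity_apply _ hs, ← (Measure.measurePreserving_neg μ).setLIntegral_comp_preimage_emb
      measurableEmbedding_neg (fun x ↦ f (-x)) s]
  simp only [neg_neg]

theorem Real.map_inv_volume_withDensity (f : ℝ → ℝ≥0∞) :
    (volume.withDensity f).map Inv.inv =
      volume.withDensity fun x ↦ ENNReal.ofReal (x ^ 2)⁻¹ * f x⁻¹ := by
  ext s hs
  have himage : Inv.inv '' (s \ {0}) = Inv.inv ⁻¹' s \ {0} := by
    rw [inv_involutive.image_eq_preimage_symm, preimage_sdiff]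
    simp
  rw [Measure.map_apply measurable_inv hs, withDensity_apply _ (measurable_inv hs),
    withDensity_apply _ hs,
    ← setLIntegral_congr (sdiff_null_ae_eq_self (s := Inv.inv ⁻¹' s) (measure_singleton 0)),
    ← setLIntegral_congr (sdiff_null_ae_eq_self (s := s) (measure_singleton 0)), ← himage,
    lintegral_image_eq_lintegral_abs_deriv_mul (hs.diff (measurableSet_singleton 0))
      (fun x hx ↦ (hasDerivAt_inv hx.2).hasDerivWithinAt) inv_injective.injOn]
  simp only [abs_neg, abs_inv, abs_sq]

section Overshoot

variable {α β : ℝ}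

theorem sin_mul_pi_div_two_eq_of_add_eq_two (hαβ : α + β = 2) :
    sin (β * π / 2) = sin (α * π / 2) := by
  have hβ : β = 2 - α := by linarith
  rw [hβ, show (2 - α) * π / 2 = π - α * π / 2 by ring, sin_pi_sub]

theorem inv_sq_mul_uDens_inv_of_pos (hαβ : α + β = 2) {x : ℝ} (hx : 0 < x) :
    (x ^ 2)⁻¹ * uDens α (-1) x⁻¹ = vDens β 1 (-x) := by
  rw [uDens, indicator_of_mem (mem_Ici.2 (inv_nonneg.2 hx.le)),
    vDens, indicator_of_mem (mem_Iic.2 (neg_nonpos.2 hx.le)),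
    sin_mul_pi_div_two_eq_of_add_eq_two hαβ, neg_neg, one_div, inv_inv, neg_div_neg_eq, one_div,
    Real.inv_rpow hx.le, show β / 2 = 1 - α / 2 by linarith, Real.rpow_sub hx, Real.rpow_one]
  have : 0 < x ^ (α / 2) := Real.rpow_pos_of_pos hx _
  field_simp

theorem inv_sq_mul_uDens_inv (hβ : 0 < β) (hαβ : α + β = 2) (x : ℝ) :
    (x ^ 2)⁻¹ * uDens α (-1) x⁻¹ = vDens β 1 (-x) := by
  rcases lt_trichotomy x 0 with hx | rfl | hx
  · rw [uDens, vDens, indicator_of_notMem (by simpa using hx),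
      indicator_of_notMem (by simpa using hx), mul_zero]
  · simp [vDens, Real.zero_rpow (half_pos hβ).ne']
  · exact inv_sq_mul_uDens_inv_of_pos hαβ hx

theorem map_inv_withDensity_uDens (hβ : 0 < β) (hαβ : α + β = 2) :
    (volume.withDensity fun y ↦ ENNReal.ofReal (uDens α (-1) y)).map Inv.inv =
      (volume.withDensity fun y ↦ ENNReal.ofReal (vDens β 1 y)).map Neg.neg := by
  rw [Real.map_inv_volume_withDensity, Measure.map_neg_withDensity]
  congr with x
  rw [← ENNReal.ofReal_mul (by positivity), inv_sq_mul_uDens_inv hβ hαβ]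

end Overshoot

theorem neg_mul_overshoot_symmetric_general
    {Ω : Type*} [MeasureSpace Ω] [IsProbabilityMeasure (ℙ : Measure Ω)]
    (α β : ℝ) (hβ : β ∈ Set.Ioo (0 : ℝ) 2)
    (hαβ : α + β = 2)
    (U V : Ω → ℝ) (hU : Measurable U) (hV : Measurable V)
    (hindep : IndepFun U V ℙ)
    (hUd : Measure.map U ℙ = volume.withDensity (fun y => ENNReal.ofReal (uDens α (-1) y)))
    (hVd : Measure.map V ℙ = volume.withDensity (fun y => ENNReal.ofReal (vDens β 1 y))) :
    ∀ s : ℝ, ℙ {ω | -(U ω * V ω) ≤ s} = ℙ {ω | (-(U ω * V ω))⁻¹ ≤ s} := by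
  have hlaw : IdentDistrib U⁻¹ (-V) ℙ ℙ := by
    refine ⟨hU.inv.aemeasurable, hV.neg.aemeasurable, ?_⟩
    show Measure.map (Inv.inv ∘ U) ℙ = Measure.map (Neg.neg ∘ V) ℙ
    rw [← Measure.map_map measurable_inv hU, ← Measure.map_map measurable_neg hV, hUd, hVd,
      map_inv_withDensity_uDens hβ.1 hαβ]
  have hind : IndepFun U (-V) ℙ := hindep.comp measurable_id measurable_neg
  have hsymm := hind.identDistrib_mul_inv hlaw
  rw [mul_neg] at hsymm
  exact fun s ↦ hsymm.measure_mem_eq measurableSet_Iic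

/-- For `α, β ∈ (0,2)` with `α + β = 2` and independent `U ∼ u_α(-1,·)`, `V ∼ v_β(1,·)`,
the random variables `-U·V` and `(-U·V)⁻¹` have the same distribution. -/
theorem neg_mul_overshoot_symmetric
    {Ω : Type*} [MeasureSpace Ω] [IsProbabilityMeasure (ℙ : Measure Ω)]
    (α β : ℝ) (hα : α ∈ Set.Ioo (0 : ℝ) 2) (hβ : β ∈ Set.Ioo (0 : ℝ) 2)
    (hαβ : α + β = 2)
    (U V : Ω → ℝ) (hU : Measurable U) (hV : Measurable V)
    (hindep : IndepFun U V ℙ)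
    (hUd : Measure.map U ℙ = volume.withDensity (fun y => ENNReal.ofReal (uDens α (-1) y)))
    (hVd : Measure.map V ℙ = volume.withDensity (fun y => ENNReal.ofReal (vDens β 1 y))) :
    ∀ s : ℝ, ℙ {ω | -(U ω * V ω) ≤ s} = ℙ {ω | (-(U ω * V ω))⁻¹ ≤ s} :=
  neg_mul_overshoot_symmetric_general α β hβ hαβ U V hU hV hindep hUd hVd
end

section
/- Let (Ω, F, P) be a probability space, r < 0 a real number, Y a strictly positive random variable with E(Y^r) < ∞, and (W_i)_{i≥1} a sequence of strictly positive random variables, independent of each other and of Y, all with the same distribution, such that E(W_1^r) < 1. Then the products Y_n := Y · ∏_{i=1}^{n−1} W_i converge to ∞ almost surely as n → ∞. -/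
open MeasureTheory ProbabilityTheory Filter Finset Topology
open scoped ENNReal

/-!
For `r < 0` the functions `Z_n = Y_n ^ r` are nonnegative, and by independence
`E Z_n = E(Y ^ r) · E(W_1 ^ r) ^ (n - 1)`, a geometric sequence. Hence `E (∑ Z_n) < ∞`, so
`∑ Z_n < ∞` almost surely, which forces `Z_n → 0` and therefore `Y_n → ∞`. The moments are taken as lower Lebesgue
integrals, so that the product formula for independent factors needs no integrability.
-/

theorem ae_tendsto_zero_of_tsum_lintegral_ne_top {α : Type*} [MeasurableSpace α]
    {μ : Measure α} {f : ℕ → α → ℝ≥0∞} (hf : ∀ n, AEMeasurable (f n) μ)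
    (h : ∑' n, ∫⁻ a, f n a ∂μ ≠ ∞) :
    ∀ᵐ a ∂μ, Tendsto (fun n => f n a) atTop (𝓝 0) := by
  have h_sum : ∀ᵐ a ∂μ, ∑' n, f n a < ∞ := by
    refine ae_lt_top' (AEMeasurable.tsum hf) ?_
    rwa [lintegral_tsum hf]
  filter_upwards [h_sum] with a ha
  exact ENNReal.tendsto_atTop_zero_of_tsum_ne_top ha.ne

theorem Filter.Tendsto.atTop_of_rpow_tendsto_zero {α : Type*} {l : Filter α} {u : α → ℝ}
    (hu : ∀ a, 0 < u a) {r : ℝ} (hr : r < 0) (h : Tendsto (fun a => u a ^ r) l (𝓝 0)) :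
    Tendsto u l atTop := by
  have h_within : Tendsto (fun a => u a ^ r) l (𝓝[>] 0) :=
    tendsto_nhdsWithin_iff.mpr ⟨h, .of_forall fun a => Real.rpow_pos_of_pos (hu a) r⟩
  have h_inv := (tendsto_rpow_neg_nhdsGT_zero (inv_lt_zero.mpr hr)).comp h_within
  refine h_inv.congr fun a => ?_
  exact Real.rpow_rpow_inv (hu a).le hr.ne

theorem ENNReal.tsum_prod_range_ne_top {m : ℕ → ℝ≥0∞} {c : ℝ≥0∞} (h0 : m 0 ≠ ∞)
    (hc : c < 1) (hm : ∀ k, m (k + 1) ≤ c) :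
    ∑' n, ∏ i ∈ range n, m i ≠ ∞ := by
  have h_le : ∀ n, ∏ i ∈ range (n + 1), m i ≤ m 0 * c ^ n := fun n => by
    rw [prod_range_succ', mul_comm]
    gcongr
    exact (prod_le_pow_card _ _ _ fun k _ => hm k).trans_eq (by rw [card_range])
  have h_geom : m 0 * (1 - c)⁻¹ ≠ ∞ :=
    ENNReal.mul_ne_top h0 (ENNReal.inv_ne_top.mpr (tsub_pos_of_lt hc).ne')
  refine ne_top_of_le_ne_top (ENNReal.add_ne_top.mpr ⟨ENNReal.one_ne_top, h_geom⟩) ?_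
  calc ∑' n, ∏ i ∈ range n, m i = 1 + ∑' n, ∏ i ∈ range (n + 1), m i := by
        rw [tsum_eq_zero_add' ENNReal.summable, prod_range_zero]
    _ ≤ 1 + ∑' n, m 0 * c ^ n := by gcongr with n; exact h_le n
    _ = 1 + m 0 * (1 - c)⁻¹ := by rw [ENNReal.tsum_mul_left, ENNReal.tsum_geometric]

theorem ProbabilityTheory.iIndepFun.ae_tendsto_prod_atTop {Ω : Type*} [MeasurableSpace Ω]
    {μ : Measure Ω} {X : ℕ → Ω → ℝ} (hX : iIndepFun X μ) (hX_meas : ∀ i, Measurable (X i))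
    (hX_pos : ∀ i ω, 0 < X i ω) {r : ℝ} (hr : r < 0)
    (h_sum : ∑' n, ∏ i ∈ range n, ∫⁻ ω, ENNReal.ofReal (X i ω ^ r) ∂μ ≠ ∞) :
    ∀ᵐ ω ∂μ, Tendsto (fun n => ∏ i ∈ range n, X i ω) atTop atTop := by
  set G : ℕ → Ω → ℝ≥0∞ := fun i ω => ENNReal.ofReal (X i ω ^ r)
  have h_meas : ∀ _ : ℕ, Measurable fun x : ℝ => ENNReal.ofReal (x ^ r) := fun _ => by fun_prop
  have hG_meas : ∀ i, Measurable (G i) := fun i => h_meas i |>.comp (hX_meas i)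
  have hG_indep : iIndepFun G μ := hX.comp _ h_meas
  have h_prod_eq : ∀ n ω, ∏ i ∈ range n, G i ω = ENNReal.ofReal ((∏ i ∈ range n, X i ω) ^ r) :=
    fun n ω => by
      rw [← Real.finsetProd_rpow _ _ fun i _ => (hX_pos i ω).le,
        ENNReal.ofReal_prod_of_nonneg fun i _ => (Real.rpow_pos_of_pos (hX_pos i ω) r).le]
  have h_lint : ∀ n, ∫⁻ ω, ∏ i ∈ range n, G i ω ∂μ = ∏ i ∈ range n, ∫⁻ ω, G i ω ∂μ :=
    fun n => lintegral_prod_eq_prod_lintegral_of_indepFun _ G hG_indep hG_meas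
  have h_ae := ae_tendsto_zero_of_tsum_lintegral_ne_top (μ := μ)
    (f := fun n ω => ∏ i ∈ range n, G i ω)
    (fun n => (Finset.measurable_prod _ fun i _ => hG_meas i).aemeasurable)
    (by simp only [h_lint]; exact h_sum)
  filter_upwards [h_ae] with ω hω
  simp only [h_prod_eq] at hω
  have h_pos : ∀ n, 0 < ∏ i ∈ range n, X i ω := fun n => prod_pos fun i _ => hX_pos i ω
  refine Tendsto.atTop_of_rpow_tendsto_zero h_pos hr ?_
  have h_real := (ENNReal.tendsto_toReal_iff (fun _ => ENNReal.ofReal_ne_top)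
    ENNReal.zero_ne_top).mpr hω
  rw [ENNReal.toReal_zero] at h_real
  exact h_real.congr fun n => ENNReal.toReal_ofReal (Real.rpow_nonneg (h_pos n).le r)

/-- If `Y > 0` with `E(Y^r) < ∞` (`r < 0`), and `(W_i)` are strictly positive, i.i.d.,
independent of `Y`, with `E(W_1^r) < 1`, then `Y_n = Y ∏_{i=1}^{n-1} W_i → ∞` a.s. -/
theorem prod_tendsto_atTop_of_neg_moment_lt_one
    {Ω : Type*} [MeasureSpace Ω] [IsProbabilityMeasure (ℙ : Measure Ω)]
    (r : ℝ) (hr : r < 0)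
    (Y : Ω → ℝ) (hY_meas : Measurable Y) (hY_pos : ∀ ω, 0 < Y ω)
    (hY_mom : Integrable (fun ω => Y ω ^ r) ℙ)
    (W : ℕ → Ω → ℝ) (hW_meas : ∀ i, Measurable (W i)) (hW_pos : ∀ i ω, 0 < W i ω)
    (h_indep : iIndepFun (m := fun _ : ℕ => (inferInstance : MeasurableSpace ℝ))
      (fun i : ℕ => match i with | 0 => Y | (k + 1) => W k) ℙ)
    (h_ident : ∀ i, IdentDistrib (W i) (W 0) ℙ ℙ)
    (hW_int : Integrable (fun ω => W 0 ω ^ r) ℙ)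
    (hW_mom : ∫ ω, W 0 ω ^ r ∂ℙ < 1) :
    ∀ᵐ ω ∂ℙ, Tendsto (fun n => Y ω * ∏ i ∈ Finset.range n, W i ω) atTop atTop := by
  set X : ℕ → Ω → ℝ := fun i => match i with | 0 => Y | (k + 1) => W k
  have hX_meas : ∀ i, Measurable (X i) := by rintro (_ | k); exacts [hY_meas, hW_meas k]
  have hX_pos : ∀ i ω, 0 < X i ω := by rintro (_ | k); exacts [hY_pos, hW_pos k]
  have h_rpow_meas : Measurable fun x : ℝ => ENNReal.ofReal (x ^ r) := by fun_prop
  have h_moment_W : ∀ k, ∫⁻ ω, ENNReal.ofReal (W k ω ^ r) = ∫⁻ ω, ENNReal.ofReal (W 0 ω ^ r) :=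
    fun k => ((h_ident k).comp h_rpow_meas).lintegral_eq
  have h_moment_lt_one : ∫⁻ ω, ENNReal.ofReal (W 0 ω ^ r) < 1 := by
    rw [← ofReal_integral_eq_lintegral_ofReal hW_int
      (.of_forall fun ω => (Real.rpow_pos_of_pos (hW_pos 0 ω) r).le)]
    exact ENNReal.ofReal_lt_one.mpr hW_mom
  have h_sum := ENNReal.tsum_prod_range_ne_top (m := fun i => ∫⁻ ω, ENNReal.ofReal (X i ω ^ r))
    hY_mom.lintegral_lt_top.ne h_moment_lt_one fun k => (h_moment_W k).le
  filter_upwards [h_indep.ae_tendsto_prod_atTop hX_meas hX_pos hr h_sum] with ω hω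
  rw [← tendsto_add_atTop_iff_nat 1] at hω
  refine hω.congr fun n => ?_
  rw [prod_range_succ', mul_comm]
end
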